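/- Any fixed point Z∞ of the Soft-Impute map, i.e., Z∞ = S_λ(P_Ω(X) + P_Ω^⊥(Z∞)), is a stationary point of f_λ(Z) = (1/2)‖P_Ω(Z) − P_Ω(X)‖_F² + λ‖Z‖_*: there exists a subgradient G ∈ ∂‖Z∞‖_* such that P_Ω(Z∞) − P_Ω(X) + λG = 0; consequently Z∞ is a global minimizer of the convex function f_λ. -/

import Mathlib

open Matrix BigOperators Finset

noncomputable section

/-- Squared Frobenius norm of a real matrix. -/
def frobSq {m n : ℕ} (A : Matrix (Fin m) (Fin n) ℝ) : ℝ :=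
  ∑ i, ∑ j, (A i j) ^ 2

/-- Frobenius norm. -/
def frobNorm {m n : ℕ} (A : Matrix (Fin m) (Fin n) ℝ) : ℝ :=
  Real.sqrt (frobSq A)

/-- The singular values of `A`, as square roots of the eigenvalues of `Aᴴ * A`. -/
def singVals {m n : ℕ} (A : Matrix (Fin m) (Fin n) ℝ) : Fin n → ℝ :=
  fun i => Real.sqrt (((by simpa using Matrix.isHermitian_conjTranspose_mul_self A :
    (Aᵀ * A).IsHermitian)).eigenvalues i)

/-- Nuclear norm: the sum of the singular values. -/
def nnorm {m n : ℕ} (A : Matrix (Fin m) (Fin n) ℝ) : ℝ :=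
  ∑ i, singVals A i

/-- Spectral norm: the largest singular value. -/
def specNorm {m n : ℕ} (A : Matrix (Fin m) (Fin n) ℝ) : ℝ :=
  ⨆ i, singVals A i

/-- Projection onto the observed entries `Ω`. -/
def pO {m n : ℕ} (Ω : Finset (Fin m × Fin n)) (Y : Matrix (Fin m) (Fin n) ℝ) :
    Matrix (Fin m) (Fin n) ℝ :=
  fun i j => if (i, j) ∈ Ω then Y i j else 0

/-- Complementary projection `P_Ω^⊥ = I - P_Ω`. -/
def pOc {m n : ℕ} (Ω : Finset (Fin m × Fin n)) (Y : Matrix (Fin m) (Fin n) ℝ) :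
    Matrix (Fin m) (Fin n) ℝ :=
  Y - pO Ω Y

/-- The objective `f_λ(Z) = ½‖P_Ω(Z) - P_Ω(X)‖_F² + λ‖Z‖_*`. -/
def fObj {m n : ℕ} (Ω : Finset (Fin m × Fin n)) (X : Matrix (Fin m) (Fin n) ℝ) (lam : ℝ)
    (Z : Matrix (Fin m) (Fin n) ℝ) : ℝ :=
  (1 / 2) * frobSq (pO Ω Z - pO Ω X) + lam * nnorm Z

/-- The surrogate `Q_λ(Z | Z̃) = ½‖P_Ω(X) + P_Ω^⊥(Z̃) - Z‖_F² + λ‖Z‖_*`. -/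
def qObj {m n : ℕ} (Ω : Finset (Fin m × Fin n)) (X : Matrix (Fin m) (Fin n) ℝ) (lam : ℝ)
    (Z Zt : Matrix (Fin m) (Fin n) ℝ) : ℝ :=
  (1 / 2) * frobSq (pO Ω X + pOc Ω Zt - Z) + lam * nnorm Z

/-- `IsSVD W U d V` : `W = U D Vᵀ` is a thin SVD of `W` with strictly positive
singular values `d` and orthonormal columns in `U` and `V`. -/
def IsSVD {m n r : ℕ} (W : Matrix (Fin m) (Fin n) ℝ) (U : Matrix (Fin m) (Fin r) ℝ)
    (d : Fin r → ℝ) (V : Matrix (Fin n) (Fin r) ℝ) : Prop :=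
  Uᵀ * U = 1 ∧ Vᵀ * V = 1 ∧ (∀ i, 0 < d i) ∧ W = U * Matrix.diagonal d * Vᵀ

/-- Trace inner product `⟨A, B⟩ = tr(AᵀB)`. -/
def minner {m n : ℕ} (A B : Matrix (Fin m) (Fin n) ℝ) : ℝ :=
  ∑ i, ∑ j, A i j * B i j

/-- `G` is a subgradient of the nuclear norm at `Z`. -/
def NucSubgrad {m n : ℕ} (Z G : Matrix (Fin m) (Fin n) ℝ) : Prop :=
  ∀ Y, nnorm Z + minner G (Y - Z) ≤ nnorm Y

end

/-!
The nuclear norm is dual to the spectral norm. Diagonalising `YᵀY` gives `Y = Q diag(σ) Wᵀ`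
with `W` orthogonal, `σ` the singular values and `Q` a contraction, so for every contraction `G`
the trace formula gives `⟨G, Y⟩ = Σ σₖ (Wᵀ Gᵀ Q)ₖₖ ≤ Σ σₖ = ‖Y‖_*`, since a product of
contractions is a contraction and its diagonal entries are at most `1`. Pairing with the
contraction `Q Wᵀ` gives `‖U diag(c) Vᵀ‖_* ≤ Σ c` in the same way.

At the fixed point `Z = U diag((d - λ)₊) Vᵀ` the contraction `G = U diag(min(d, λ)/λ) Vᵀ` thus
satisfies `⟨G, Z⟩ = Σ (d - λ)₊ ≥ ‖Z‖_*`, so it is a subgradient, and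
`λ G = U diag(d) Vᵀ - Z = P_Ω(X) - P_Ω(Z)`. Expanding the square around `Z`,
`f_λ(Y) - f_λ(Z) ≥ ⟨P_Ω(Z) - P_Ω(X) + λ G, Y - Z⟩ = 0`.
-/

section Contraction

variable {ι κ ν : Type*} [Fintype ι] [Fintype κ] [Fintype ν]

theorem dotProduct_sq_le (x y : ι → ℝ) : (x ⬝ᵥ y) ^ 2 ≤ (x ⬝ᵥ x) * (y ⬝ᵥ y) := by
  simpa only [dotProduct, sq] using Finset.sum_mul_sq_le_sq_mul_sq Finset.univ x y

theorem dotProduct_self_nonneg (x : ι → ℝ) : 0 ≤ x ⬝ᵥ x :=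
  Finset.sum_nonneg fun i _ => mul_self_nonneg (x i)

/-- `‖A‖₂ ≤ 1`, for the spectral norm. -/
def IsContraction (A : Matrix ι κ ℝ) : Prop :=
  ∀ v, A *ᵥ v ⬝ᵥ A *ᵥ v ≤ v ⬝ᵥ v

theorem isContraction_of_transpose_mul_self_eq_diagonal [DecidableEq κ] {A : Matrix ι κ ℝ}
    {e : κ → ℝ} (hA : Aᵀ * A = diagonal e) (he : ∀ k, e k ≤ 1) : IsContraction A := by
  intro v
  rw [dotProduct_mulVec, ← mulVec_transpose, mulVec_mulVec, hA]
  simp only [dotProduct, mulVec_diagonal]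
  exact Finset.sum_le_sum fun k _ => by nlinarith [he k, mul_self_nonneg (v k)]

theorem isContraction_of_transpose_mul_self_eq_one [DecidableEq κ] {A : Matrix ι κ ℝ}
    (hA : Aᵀ * A = 1) : IsContraction A :=
  isContraction_of_transpose_mul_self_eq_diagonal (e := 1) hA fun _ => le_rfl

theorem isContraction_diagonal [DecidableEq κ] {g : κ → ℝ} (hg : ∀ k, |g k| ≤ 1) :
    IsContraction (diagonal g) :=
  isContraction_of_transpose_mul_self_eq_diagonal (e := fun k => g k * g k)
    (by rw [diagonal_transpose, diagonal_mul_diagonal])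
    fun k => by nlinarith [abs_mul_abs_self (g k), abs_nonneg (g k), hg k]

theorem IsContraction.mul {A : Matrix ι κ ℝ} {B : Matrix κ ν ℝ} (hA : IsContraction A)
    (hB : IsContraction B) : IsContraction (A * B) := fun v => by
  simpa only [mulVec_mulVec] using (hA (B *ᵥ v)).trans (hB v)

theorem IsContraction.transpose {A : Matrix ι κ ℝ} (hA : IsContraction A) :
    IsContraction Aᵀ := by
  intro v
  set w := Aᵀ *ᵥ v
  have hw : w ⬝ᵥ w = v ⬝ᵥ A *ᵥ w := by
    rw [dotProduct_mulVec, ← mulVec_transpose, transpose_transpose, dotProduct_comm]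
  have hsq : (w ⬝ᵥ w) * (w ⬝ᵥ w) ≤ (v ⬝ᵥ v) * (w ⬝ᵥ w) := by
    calc (w ⬝ᵥ w) * (w ⬝ᵥ w) = (v ⬝ᵥ A *ᵥ w) ^ 2 := by rw [hw, sq]
      _ ≤ (v ⬝ᵥ v) * (A *ᵥ w ⬝ᵥ A *ᵥ w) := dotProduct_sq_le v (A *ᵥ w)
      _ ≤ (v ⬝ᵥ v) * (w ⬝ᵥ w) := mul_le_mul_of_nonneg_left (hA w) (dotProduct_self_nonneg v)
  nlinarith [dotProduct_self_nonneg w, dotProduct_self_nonneg v]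

theorem IsContraction.apply_self_le_one [DecidableEq ι] {A : Matrix ι ι ℝ} (hA : IsContraction A)
    (i : ι) : A i i ≤ 1 := by
  have hcs := dotProduct_sq_le (Pi.single i 1) (A *ᵥ Pi.single i 1)
  have hAi := hA (Pi.single i 1)
  simp only [single_one_dotProduct, dotProduct_single_one, mulVec_single_one, col_apply,
    Pi.single_eq_same, one_mul] at hcs hAi
  nlinarith

end Contraction

theorem Matrix.IsHermitian.exists_orthogonal_diagonalization {ι : Type*} [Fintype ι]
    [DecidableEq ι] {A : Matrix ι ι ℝ} (hA : A.IsHermitian) :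
    ∃ W : Matrix ι ι ℝ, Wᵀ * W = 1 ∧ W * Wᵀ = 1 ∧ A = W * diagonal hA.eigenvalues * Wᵀ := by
  have hW := hA.eigenvectorUnitary.2
  have hA' := hA.spectral_theorem
  simp only [RCLike.ofReal_real_eq_id, Function.id_comp, Unitary.conjStarAlgAut_apply,
    star_eq_conjTranspose, conjTranspose_eq_transpose_of_trivial] at hA' hW
  exact ⟨_, hW.1, hW.2, hA'⟩

/-- Since `0⁻¹ = 0`, the columns of `B * diagonal s⁻¹` are the normalised columns of `B`, or zero
where `s k = 0`; those columns of `B` vanish as well. -/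
theorem polar_of_transpose_mul_self_eq_diagonal {ι κ : Type*} [Fintype ι] [Fintype κ]
    [DecidableEq κ] {B : Matrix ι κ ℝ} {s : κ → ℝ}
    (hB : Bᵀ * B = diagonal fun k => s k * s k) :
    IsContraction (B * diagonal s⁻¹) ∧
      (B * diagonal s⁻¹)ᵀ * (B * diagonal s⁻¹) * diagonal s = diagonal s ∧
      B * diagonal s⁻¹ * diagonal s = B := by
  have hconj : ∀ t : κ → ℝ,
      (B * diagonal t)ᵀ * (B * diagonal t) = diagonal fun k => t k * (s k * s k) * t k := by
    intro t
    rw [transpose_mul, diagonal_transpose, Matrix.mul_assoc, ← Matrix.mul_assoc Bᵀ, hB,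
      diagonal_mul_diagonal, diagonal_mul_diagonal]
    simp only [mul_assoc]
  have hQ : (B * diagonal s⁻¹)ᵀ * (B * diagonal s⁻¹) = diagonal fun k => (s k)⁻¹ * s k := by
    rw [hconj]
    congr 1
    funext k
    rcases eq_or_ne (s k) 0 with h | h <;> simp [h]
  refine ⟨isContraction_of_transpose_mul_self_eq_diagonal hQ fun k => ?_, ?_, ?_⟩
  · rcases eq_or_ne (s k) 0 with h | h <;> simp [h]
  · rw [hQ, diagonal_mul_diagonal]
    congr 1
    funext k
    rcases eq_or_ne (s k) 0 with h | h <;> simp [h]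
  · have hker : (B * diagonal fun k => (s k)⁻¹ * s k - 1)ᵀ *
        (B * diagonal fun k => (s k)⁻¹ * s k - 1) = 0 := by
      rw [hconj, ← diagonal_zero]
      congr 1
      funext k
      rcases eq_or_ne (s k) 0 with h | h <;> simp [h]
    rw [← conjTranspose_eq_transpose_of_trivial, conjTranspose_mul_self_eq_zero,
      ← diagonal_sub, Matrix.mul_sub, diagonal_one, Matrix.mul_one, sub_eq_zero] at hker
    rw [Matrix.mul_assoc, diagonal_mul_diagonal]
    simpa only [Pi.inv_apply] using hker

theorem exists_svd {m n : ℕ} (Y : Matrix (Fin m) (Fin n) ℝ) :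
    ∃ (Q : Matrix (Fin m) (Fin n) ℝ) (W : Matrix (Fin n) (Fin n) ℝ), IsContraction Q ∧
      Wᵀ * W = 1 ∧ Qᵀ * Q * diagonal (singVals Y) = diagonal (singVals Y) ∧
      Y = Q * diagonal (singVals Y) * Wᵀ := by
  have hpsd : (Yᵀ * Y).PosSemidef := by
    simpa using posSemidef_conjTranspose_mul_self Y
  obtain ⟨W, hW, hW', hYY⟩ := hpsd.isHermitian.exists_orthogonal_diagonalization
  have hB : (Y * W)ᵀ * (Y * W) = diagonal fun k => singVals Y k * singVals Y k := by
    calc (Y * W)ᵀ * (Y * W) = Wᵀ * (W * diagonal hpsd.isHermitian.eigenvalues * Wᵀ) * W := by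
          rw [← hYY, transpose_mul, Matrix.mul_assoc, Matrix.mul_assoc, Matrix.mul_assoc]
      _ = diagonal hpsd.isHermitian.eigenvalues := by
          simp only [Matrix.mul_assoc, hW, Matrix.mul_one]
          rw [← Matrix.mul_assoc, hW, Matrix.one_mul]
      _ = diagonal fun k => singVals Y k * singVals Y k := by
          congr 1
          funext k
          exact (Real.mul_self_sqrt (hpsd.eigenvalues_nonneg k)).symm
  obtain ⟨hQ, hQQ, hQY⟩ := polar_of_transpose_mul_self_eq_diagonal hB
  refine ⟨_, W, hQ, hW, hQQ, ?_⟩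
  rw [hQY, Matrix.mul_assoc, hW', Matrix.mul_one]

section TraceInner

variable {m n r : ℕ}

theorem minner_eq_trace (A B : Matrix (Fin m) (Fin n) ℝ) : minner A B = trace (Aᵀ * B) := by
  simp only [minner, trace, Matrix.diag, mul_apply, transpose_apply]
  exact Finset.sum_comm

theorem minner_factored {A : Matrix (Fin m) (Fin r) ℝ} {B : Matrix (Fin n) (Fin r) ℝ}
    {c : Fin r → ℝ} (hA : Aᵀ * A * diagonal c = diagonal c) (hB : Bᵀ * B = 1) (g : Fin r → ℝ) :
    minner (A * diagonal g * Bᵀ) (A * diagonal c * Bᵀ) = ∑ k, g k * c k := by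
  calc minner (A * diagonal g * Bᵀ) (A * diagonal c * Bᵀ)
      = trace (B * (diagonal g * (Aᵀ * A * diagonal c)) * Bᵀ) := by
        simp only [minner_eq_trace, transpose_mul, transpose_transpose, diagonal_transpose,
          Matrix.mul_assoc]
    _ = trace (Bᵀ * B * (diagonal g * (Aᵀ * A * diagonal c))) := trace_mul_cycle _ _ _
    _ = ∑ k, g k * c k := by
        rw [hA, hB, Matrix.one_mul, diagonal_mul_diagonal, trace_diagonal]

theorem minner_le_sum_of_isContraction {G : Matrix (Fin m) (Fin n) ℝ}
    {A : Matrix (Fin m) (Fin r) ℝ} {B : Matrix (Fin n) (Fin r) ℝ} {s : Fin r → ℝ}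
    (hG : IsContraction G) (hA : IsContraction A) (hB : IsContraction Bᵀ) (hs : ∀ k, 0 ≤ s k) :
    minner G (A * diagonal s * Bᵀ) ≤ ∑ k, s k := by
  have hC : IsContraction (Bᵀ * Gᵀ * A) := (hB.mul hG.transpose).mul hA
  calc minner G (A * diagonal s * Bᵀ) = trace (Bᵀ * Gᵀ * A * diagonal s) := by
        rw [minner_eq_trace, ← Matrix.mul_assoc, trace_mul_cycle, Matrix.mul_assoc _ A]
    _ = ∑ k, (Bᵀ * Gᵀ * A) k k * s k := by simp only [trace, Matrix.diag, mul_diagonal]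
    _ ≤ ∑ k, s k := Finset.sum_le_sum fun k _ =>
        mul_le_of_le_one_left (hs k) (hC.apply_self_le_one k)

end TraceInner

section NuclearNorm

variable {m n r : ℕ}

theorem minner_le_nnorm {G : Matrix (Fin m) (Fin n) ℝ} (hG : IsContraction G)
    (Y : Matrix (Fin m) (Fin n) ℝ) : minner G Y ≤ nnorm Y := by
  obtain ⟨Q, W, hQ, hW, -, hY⟩ := exists_svd Y
  calc minner G Y = minner G (Q * diagonal (singVals Y) * Wᵀ) := by rw [← hY]
    _ ≤ nnorm Y := minner_le_sum_of_isContraction hG hQ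
        (isContraction_of_transpose_mul_self_eq_one hW).transpose fun _ => Real.sqrt_nonneg _

theorem nnorm_factored_le {U : Matrix (Fin m) (Fin r) ℝ} {V : Matrix (Fin n) (Fin r) ℝ}
    {c : Fin r → ℝ} (hU : Uᵀ * U = 1) (hV : Vᵀ * V = 1) (hc : ∀ k, 0 ≤ c k) :
    nnorm (U * diagonal c * Vᵀ) ≤ ∑ k, c k := by
  set Z := U * diagonal c * Vᵀ
  obtain ⟨Q, W, hQ, hW, hQQ, hZ⟩ := exists_svd Z
  set P := Q * diagonal (1 : Fin n → ℝ) * Wᵀ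
  have hP : IsContraction P := by
    simpa only [P, diagonal_one', Matrix.mul_one] using
      hQ.mul (isContraction_of_transpose_mul_self_eq_one hW).transpose
  calc nnorm Z = minner P (Q * diagonal (singVals Z) * Wᵀ) := by
        rw [minner_factored hQQ hW]
        simp only [Pi.one_apply, one_mul, nnorm]
    _ = minner P Z := by rw [← hZ]
    _ ≤ ∑ k, c k := minner_le_sum_of_isContraction hP
        (isContraction_of_transpose_mul_self_eq_one hU)
        (isContraction_of_transpose_mul_self_eq_one hV).transpose hc

theorem minner_sub_right (A B C : Matrix (Fin m) (Fin n) ℝ) :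
    minner A (B - C) = minner A B - minner A C := by
  simp only [minner, Matrix.sub_apply, mul_sub, Finset.sum_sub_distrib]

theorem nucSubgrad_factored {U : Matrix (Fin m) (Fin r) ℝ} {V : Matrix (Fin n) (Fin r) ℝ}
    {c g : Fin r → ℝ} (hU : Uᵀ * U = 1) (hV : Vᵀ * V = 1) (hc : ∀ k, 0 ≤ c k)
    (hg : ∀ k, |g k| ≤ 1) (hgc : ∀ k, g k * c k = c k) :
    NucSubgrad (U * diagonal c * Vᵀ) (U * diagonal g * Vᵀ) := by
  intro Y
  have hG : IsContraction (U * diagonal g * Vᵀ) :=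
    ((isContraction_of_transpose_mul_self_eq_one hU).mul (isContraction_diagonal hg)).mul
      (isContraction_of_transpose_mul_self_eq_one hV).transpose
  have hGZ : minner (U * diagonal g * Vᵀ) (U * diagonal c * Vᵀ) = ∑ k, c k := by
    rw [minner_factored (by rw [hU, Matrix.one_mul]) hV]
    simp only [hgc]
  rw [minner_sub_right, hGZ]
  linarith [minner_le_nnorm hG Y, nnorm_factored_le hU hV hc]

end NuclearNorm

section Objective

variable {m n : ℕ}

theorem frobSq_add (A B : Matrix (Fin m) (Fin n) ℝ) :
    frobSq (A + B) = frobSq A + 2 * minner A B + frobSq B := by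
  simp only [frobSq, minner, Matrix.add_apply, Finset.mul_sum, ← Finset.sum_add_distrib]
  exact Finset.sum_congr rfl fun i _ => Finset.sum_congr rfl fun j _ => by ring

theorem frobSq_nonneg (A : Matrix (Fin m) (Fin n) ℝ) : 0 ≤ frobSq A :=
  Finset.sum_nonneg fun _ _ => Finset.sum_nonneg fun _ _ => sq_nonneg _

theorem minner_add_smul_left (A B C : Matrix (Fin m) (Fin n) ℝ) (t : ℝ) :
    minner (A + t • B) C = minner A C + t * minner B C := by
  simp only [minner, Matrix.add_apply, Matrix.smul_apply, smul_eq_mul, add_mul,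
    Finset.sum_add_distrib, Finset.mul_sum, mul_assoc]

theorem pO_sub (Ω : Finset (Fin m × Fin n)) (A B : Matrix (Fin m) (Fin n) ℝ) :
    pO Ω (A - B) = pO Ω A - pO Ω B := by
  ext i j
  by_cases h : (i, j) ∈ Ω <;> simp [pO, h]

theorem minner_pO_pO (Ω : Finset (Fin m × Fin n)) (A B : Matrix (Fin m) (Fin n) ℝ) :
    minner (pO Ω A) (pO Ω B) = minner (pO Ω A) B := by
  refine Finset.sum_congr rfl fun i _ => Finset.sum_congr rfl fun j _ => ?_
  by_cases h : (i, j) ∈ Ω <;> simp [pO, h]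

theorem fObj_le_of_stationary {Ω : Finset (Fin m × Fin n)} {X Z G : Matrix (Fin m) (Fin n) ℝ}
    {lam : ℝ} (hlam : 0 ≤ lam) (hG : NucSubgrad Z G) (hstat : pO Ω Z - pO Ω X + lam • G = 0)
    (Y : Matrix (Fin m) (Fin n) ℝ) : fObj Ω X lam Z ≤ fObj Ω X lam Y := by
  have hres : pO Ω Y - pO Ω X = (pO Ω Z - pO Ω X) + pO Ω (Y - Z) := by
    rw [pO_sub]
    abel
  have hcross : minner (pO Ω Z - pO Ω X) (pO Ω (Y - Z)) + lam * minner G (Y - Z) = 0 := by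
    rw [← pO_sub, minner_pO_pO, pO_sub, ← minner_add_smul_left, hstat]
    simp only [minner, Matrix.zero_apply, zero_mul, Finset.sum_const_zero]
  have hnuc := mul_le_mul_of_nonneg_left (hG Y) hlam
  rw [mul_add] at hnuc
  simp only [fObj]
  rw [hres, frobSq_add]
  linarith [frobSq_nonneg (pO Ω (Y - Z))]

end Objective

/-- any fixed point of the Soft-Impute map is a stationary point
of `f_λ`, and hence a global minimizer. -/
theorem soft_impute_fixed_point_stationary {m n r : ℕ} (Ω : Finset (Fin m × Fin n))
    (X Zinf : Matrix (Fin m) (Fin n) ℝ) (lam : ℝ) (hlam : 0 ≤ lam)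
    (U : Matrix (Fin m) (Fin r) ℝ) (d : Fin r → ℝ) (V : Matrix (Fin n) (Fin r) ℝ)
    (hSVD : IsSVD (pO Ω X + pOc Ω Zinf) U d V)
    (hfix : Zinf = U * Matrix.diagonal (fun i => max (d i - lam) 0) * Vᵀ) :
    (∃ G : Matrix (Fin m) (Fin n) ℝ, NucSubgrad Zinf G ∧
        pO Ω Zinf - pO Ω X + lam • G = 0) ∧
    ∀ Y : Matrix (Fin m) (Fin n) ℝ, fObj Ω X lam Zinf ≤ fObj Ω X lam Y := by
  obtain ⟨hU, hV, hd, hW⟩ := hSVD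
  -- `g = min(d, λ) / λ`, written so that no division by `λ = 0` occurs
  set g : Fin r → ℝ := fun k => if d k ≤ lam then d k / lam else 1
  have hg : ∀ k, |g k| ≤ 1 := fun k => by
    by_cases h : d k ≤ lam
    · simp only [g, if_pos h, abs_div, abs_of_pos (hd k), abs_of_pos ((hd k).trans_le h)]
      exact div_le_one_of_le₀ h hlam
    · simp [g, h]
  have hgc : ∀ k, g k * max (d k - lam) 0 = max (d k - lam) 0 := fun k => by
    by_cases h : d k ≤ lam <;> simp [g, h]
  have hlamg : lam • g = fun k => d k - max (d k - lam) 0 := funext fun k => by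
    by_cases h : d k ≤ lam
    · simp [g, h, mul_div_cancel₀ _ ((hd k).trans_le h).ne']
    · simp [g, h, (not_le.mp h).le]
  have hsub : NucSubgrad Zinf (U * diagonal g * Vᵀ) :=
    hfix ▸ nucSubgrad_factored hU hV (fun _ => le_max_right _ _) hg hgc
  have hstat : pO Ω Zinf - pO Ω X + lam • (U * diagonal g * Vᵀ) = 0 := by
    rw [← Matrix.smul_mul, ← Matrix.mul_smul, ← diagonal_smul, hlamg, ← diagonal_sub,
      Matrix.mul_sub, Matrix.sub_mul, ← hW, ← hfix, pOc]
    abel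
  exact ⟨⟨_, hsub, hstat⟩, fObj_le_of_stationary hlam hsub hstat⟩
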